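/- Let X be a finite solvable group and Y a subgroup of X whose index is a power of a prime s. Let r be a prime divisor of |X| with r ≠ s. Then O_{{r,s}}(Y) and O_{{r,s}}(X) have a common Sylow r-subgroup; that is, there is a Sylow r-subgroup of O_{{r,s}}(Y) which is also a Sylow r-subgroup of O_{{r,s}}(X). -/

import Mathlib

/-!
Write `π = {r, s}`. The subgroup `O_π(X) ⊓ Y` is a normal `π`-subgroup of `Y`, hence lies in
`O_π(Y)`, and its index in `O_π(X)` divides `[X : Y] = s ^ a`; so a Sylow `r`-subgroup `R` of it is
Sylow in `O_π(X)`. It is also Sylow in `O_π(Y)` because `|O_π(Y)|` divides `|O_π(X)|`.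

That divisibility holds whenever `X` is solvable and `[X : Y]` is a `π`-number, by induction on
`|X|` along a nontrivial normal `p`-subgroup `M`. If `p ∈ π`, compare both sides with `X ⧸ M`:
`|O_π(Y)|` divides `|M| · |O_π(YM/M)|` and `|M| · |O_π(X/M)|` divides `|O_π(X)|`. If `p ∉ π`,
then `M ≤ Y`; when `M` is central, `O_π(X/M)` lifts to a normal complement of `M` in its
preimage; when it is not, `O_π(Y)` centralizes `M` (both are normal in `Y`, of coprime orders),
so one can induct in the proper normal subgroup `C_X(M)`.
-/

/-- `N` is the largest normal `π`-subgroup `O_π` of the ambient group. -/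
def IsMaxNormalPiSubgroup {G : Type*} [Group G] (π : Set ℕ) (N : Subgroup G) : Prop :=
  N.Normal ∧ (∀ p : ℕ, p.Prime → p ∣ Nat.card N → p ∈ π) ∧
  ∀ M : Subgroup G, M.Normal → (∀ p : ℕ, p.Prime → p ∣ Nat.card M → p ∈ π) → M ≤ N

open Subgroup

def IsPiNat (π : Set ℕ) (n : ℕ) : Prop := ∀ p : ℕ, p.Prime → p ∣ n → p ∈ π

namespace IsPiNat

variable {π : Set ℕ} {m n : ℕ}

lemma one : IsPiNat π 1 := fun _ hp h => absurd (Nat.eq_one_of_dvd_one h) hp.ne_one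

lemma of_dvd (hn : IsPiNat π n) (hmn : m ∣ n) : IsPiNat π m := fun p hp h => hn p hp (h.trans hmn)

lemma mul (hm : IsPiNat π m) (hn : IsPiNat π n) : IsPiNat π (m * n) :=
  fun p hp h => (hp.dvd_mul.mp h).elim (hm p hp) (hn p hp)

lemma prime_pow {p : ℕ} (hp : p.Prime) (hpπ : p ∈ π) (k : ℕ) : IsPiNat π (p ^ k) :=
  fun _ hq h => (Nat.prime_dvd_prime_iff_eq hq hp).mp (hq.dvd_of_dvd_pow h) ▸ hpπ

lemma coprime_prime_pow (hn : IsPiNat π n) {p : ℕ} (hp : p.Prime) (hpπ : p ∉ π) (k : ℕ) :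
    (p ^ k).Coprime n :=
  (hp.coprime_iff_not_dvd.mpr fun h => hpπ (hn p hp h)).pow_left k

end IsPiNat

namespace Subgroup

variable {G G' : Type*} [Group G] [Group G']

lemma card_mul_relIndex_of_le {H K : Subgroup G} (h : H ≤ K) :
    Nat.card H * H.relIndex K = Nat.card K := by
  simpa using relIndex_mul_relIndex ⊥ H K bot_le h

lemma card_comap_of_surjective {f : G →* G'} (hf : Function.Surjective f) (K : Subgroup G') :
    Nat.card (K.comap f) = Nat.card f.ker * Nat.card K := by
  rw [← card_mul_relIndex_of_le (f.ker_le_comap K), relIndex_ker,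
    map_comap_eq_self_of_surjective hf]

lemma relIndex_dvd_index_of_normal_right (H K : Subgroup G) [K.Normal] [K.FiniteIndex] :
    H.relIndex K ∣ H.index := by
  obtain ⟨t, ht⟩ := relIndex_dvd_index_of_normal K H
  have hHK : H.relIndex K * K.index = (H ⊓ K).index := by
    simpa using relIndex_inf_mul_relIndex H K ⊤
  have hKH : K.relIndex H * H.index = (H ⊓ K).index := by
    simpa [inf_comm] using relIndex_inf_mul_relIndex K H ⊤
  have hne : K.relIndex H ≠ 0 := fun h => FiniteIndex.index_ne_zero (H := K) (by simp [ht, h])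
  refine ⟨t, Nat.eq_of_mul_eq_mul_left (Nat.pos_of_ne_zero hne) ?_⟩
  rw [hKH, ← hHK, ht]
  ring

lemma le_of_coprime_card_index {N : Subgroup G} [N.Normal] [N.FiniteIndex] {Y : Subgroup G}
    (h : (Nat.card N).Coprime Y.index) : N ≤ Y :=
  relIndex_eq_one.mp <|
    (h.coprime_dvd_left (relIndex_dvd_card Y N)).eq_one_of_dvd
      (relIndex_dvd_index_of_normal_right Y N)

lemma IsComplement'.normal_right_of_le_center {M H : Subgroup G} (hMH : IsComplement' M H)
    (hM : M ≤ center G) : H.Normal := by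
  constructor
  intro h hh g
  obtain ⟨⟨m, k⟩, rfl⟩ := hMH.2 g
  have hconj : (m * k : G) * h * (m * k : G)⁻¹ = m * (k * h * (k : G)⁻¹) * (m : G)⁻¹ := by
    group
  rw [hconj, (mem_center_iff.mp (hM m.2) _).symm, mul_inv_cancel_right]
  exact H.mul_mem (H.mul_mem k.2 hh) (H.inv_mem k.2)

end Subgroup

section Solvable

variable (G : Type*) [Group G] [Group.IsSolvable G] [Nontrivial G]

lemma exists_normal_commutator_eq_bot_ne_bot :
    ∃ A : Subgroup G, A.Normal ∧ ⁅A, A⁆ = ⊥ ∧ A ≠ ⊥ := by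
  classical
  have hex : ∃ n, derivedSeries G n = ⊥ := Group.IsSolvable.solvable
  obtain ⟨m, hm⟩ : ∃ m, Nat.find hex = m + 1 := Nat.exists_eq_succ_of_ne_zero fun h => by
    simpa [h] using Nat.find_spec hex
  refine ⟨derivedSeries G m, derivedSeries_normal G m, ?_, Nat.find_min hex (by omega)⟩
  rw [← derivedSeries_succ, ← hm]
  exact Nat.find_spec hex

lemma exists_normal_isPGroup_ne_bot [Finite G] :
    ∃ p : ℕ, p.Prime ∧ ∃ M : Subgroup G, M.Normal ∧ IsPGroup p M ∧ M ≠ ⊥ := by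
  obtain ⟨A, hAn, hAab, hA⟩ := exists_normal_commutator_eq_bot_ne_bot G
  obtain ⟨p, hp, hpA⟩ := Nat.exists_prime_and_dvd ((one_lt_card_iff_ne_bot A).mpr hA).ne'
  have := Fact.mk hp
  obtain ⟨P⟩ := Sylow.nonempty (p := p) (G := A)
  have hPn : (P : Subgroup A).Normal := by
    constructor
    intro x _ g
    have hcomm : g * x = x * g :=
      Subtype.ext (mem_centralizer_iff.mp (commutator_eq_bot_iff_le_centralizer.mp hAab x.2) g g.2)
    rwa [hcomm, mul_inv_cancel_right]
  have := P.characteristic_of_normal hPn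
  refine ⟨p, hp, (P : Subgroup A).map A.subtype, inferInstance, P.isPGroup'.map _, ?_⟩
  rw [Ne, map_eq_bot_iff_of_injective _ A.subtype_injective]
  exact P.ne_bot_of_dvd_card hpA

end Solvable

section MaxNormalPiSubgroup

variable (π : Set ℕ) {G G' : Type*} [Group G] [Group G']

lemma isPiNat_card_sup {A B : Subgroup G} [A.Normal] (hA : IsPiNat π (Nat.card A))
    (hB : IsPiNat π (Nat.card B)) : IsPiNat π (Nat.card (A ⊔ B : Subgroup G)) := by
  rw [← card_mul_relIndex_of_le (le_sup_left : A ≤ A ⊔ B), relIndex_sup_left]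
  exact hA.mul (hB.of_dvd (relIndex_dvd_card A B))

variable (G) [Finite G]

lemma exists_isMaxNormalPiSubgroup : ∃ N : Subgroup G, IsMaxNormalPiSubgroup π N := by
  let S : Set (Subgroup G) := {N | N.Normal ∧ IsPiNat π (Nat.card N)}
  have hbot : ⊥ ∈ S := ⟨inferInstance, by simpa using IsPiNat.one⟩
  obtain ⟨N, ⟨hNn, hNπ⟩, hNmax⟩ := (Set.toFinite S).exists_maximal ⟨⊥, hbot⟩
  refine ⟨N, hNn, hNπ, fun M hMn hMπ => ?_⟩
  have hsup : N ⊔ M ∈ S := ⟨sup_normal N M, isPiNat_card_sup π hNπ hMπ⟩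
  exact le_sup_right.trans (hNmax hsup le_sup_left)

noncomputable def oPi : Subgroup G := (exists_isMaxNormalPiSubgroup π G).choose

lemma isMaxNormalPiSubgroup_oPi : IsMaxNormalPiSubgroup π (oPi π G) :=
  (exists_isMaxNormalPiSubgroup π G).choose_spec

instance oPi_normal : (oPi π G).Normal := (isMaxNormalPiSubgroup_oPi π G).1

lemma isPiNat_card_oPi : IsPiNat π (Nat.card (oPi π G)) := (isMaxNormalPiSubgroup_oPi π G).2.1

variable {π G}

lemma le_oPi {M : Subgroup G} (hM : M.Normal) (hMπ : IsPiNat π (Nat.card M)) : M ≤ oPi π G :=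
  (isMaxNormalPiSubgroup_oPi π G).2.2 M hM hMπ

lemma IsMaxNormalPiSubgroup.eq_oPi {N : Subgroup G} (hN : IsMaxNormalPiSubgroup π N) :
    N = oPi π G :=
  le_antisymm (le_oPi hN.1 hN.2.1) (hN.2.2 _ inferInstance (isPiNat_card_oPi π G))

variable [Finite G']

lemma map_oPi_le_of_surjective {f : G →* G'} (hf : Function.Surjective f) :
    (oPi π G).map f ≤ oPi π G' :=
  le_oPi ((oPi_normal π G).map f hf) ((isPiNat_card_oPi π G).of_dvd (card_map_dvd _ f))

instance oPi_characteristic : (oPi π G).Characteristic :=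
  characteristic_iff_map_le.mpr fun φ => map_oPi_le_of_surjective φ.surjective

lemma card_oPi_dvd_of_normal (C : Subgroup G) [C.Normal] :
    Nat.card (oPi π C) ∣ Nat.card (oPi π G) := by
  have hcard := card_map_of_injective (K := oPi π C) C.subtype_injective
  rw [← hcard]
  exact card_dvd_of_le (le_oPi inferInstance (hcard ▸ isPiNat_card_oPi π C))

lemma card_oPi_dvd_of_injective {f : G' →* G} (hf : Function.Injective f)
    (hrange : oPi π G ≤ f.range) : Nat.card (oPi π G) ∣ Nat.card (oPi π G') := by
  have hcard : Nat.card ((oPi π G).comap f) = Nat.card (oPi π G) := by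
    rw [← card_map_of_injective hf, map_comap_eq_self hrange]
  rw [← hcard]
  exact card_dvd_of_le (le_oPi ((oPi_normal π G).comap f) (hcard ▸ isPiNat_card_oPi π G))

lemma card_oPi_dvd_card_ker_mul {f : G →* G'} (hf : Function.Surjective f) :
    Nat.card (oPi π G) ∣ Nat.card f.ker * Nat.card (oPi π G') := by
  have hcard := card_mul_index (f.ker.subgroupOf (oPi π G))
  rw [← relIndex, relIndex_ker] at hcard
  rw [← hcard]
  exact mul_dvd_mul (card_comap_dvd_of_injective _ _ (oPi π G).subtype_injective)
    (card_dvd_of_le (map_oPi_le_of_surjective hf))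

lemma card_ker_mul_card_oPi_dvd {f : G →* G'} (hf : Function.Surjective f)
    (hker : IsPiNat π (Nat.card f.ker)) :
    Nat.card f.ker * Nat.card (oPi π G') ∣ Nat.card (oPi π G) := by
  rw [← card_comap_of_surjective hf]
  refine card_dvd_of_le (le_oPi ((oPi_normal π G').comap f) ?_)
  rw [card_comap_of_surjective hf]
  exact hker.mul (isPiNat_card_oPi π G')

end MaxNormalPiSubgroup

section Reduction

variable {π : Set ℕ} {G : Type*} [Group G] [Finite G]

lemma card_oPi_dvd_card_mul_card_oPi_map (M : Subgroup G) [M.Normal] (Y : Subgroup G) :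
    Nat.card (oPi π Y) ∣ Nat.card M * Nat.card (oPi π (Y.map (QuotientGroup.mk' M))) := by
  refine (card_oPi_dvd_card_ker_mul ((QuotientGroup.mk' M).subgroupMap_surjective Y)).trans
    (mul_dvd_mul_right ?_ _)
  rw [ker_subgroupMap, QuotientGroup.ker_mk']
  exact card_comap_dvd_of_injective _ _ Y.subtype_injective

/-- By Schur–Zassenhaus `M` has a complement in the preimage of `O_π(G ⧸ M)`, and the complement
is normal there because `M` is central. -/
lemma card_oPi_quotient_dvd_of_le_center (M : Subgroup G) [M.Normal] (hM : M ≤ center G)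
    (hcop : (Nat.card M).Coprime (Nat.card (oPi π (G ⧸ M)))) :
    Nat.card (oPi π (G ⧸ M)) ∣ Nat.card (oPi π G) := by
  set L := (oPi π (G ⧸ M)).comap (QuotientGroup.mk' M)
  have hML : M ≤ L := by
    simpa [QuotientGroup.ker_mk'] using (QuotientGroup.mk' M).ker_le_comap (oPi π (G ⧸ M))
  have hcardM : Nat.card (M.subgroupOf L) = Nat.card M :=
    Nat.card_congr (subgroupOfEquivOfLe hML).toEquiv
  have hindex : (M.subgroupOf L).index = Nat.card (oPi π (G ⧸ M)) := by
    have := relIndex_ker L (QuotientGroup.mk' M)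
    rwa [QuotientGroup.ker_mk', map_comap_eq_self_of_surjective (QuotientGroup.mk'_surjective M)]
      at this
  obtain ⟨H, hH⟩ := exists_right_complement'_of_coprime (N := M.subgroupOf L)
    (by rwa [hcardM, hindex])
  have hcenter : M.subgroupOf L ≤ center L := fun m hm =>
    mem_center_iff.mpr fun l => Subtype.ext (mem_center_iff.mp (hM hm) l)
  have := hH.normal_right_of_le_center hcenter
  have hcardH : Nat.card H = Nat.card (oPi π (G ⧸ M)) := by
    rw [← hindex, hH.symm.index_eq_card]
  rw [← hcardH]
  exact (card_dvd_of_le (le_oPi this (hcardH ▸ isPiNat_card_oPi π _))).trans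
    (card_oPi_dvd_of_normal L)

lemma map_oPi_le_centralizer {Y M : Subgroup G} [M.Normal] (hMY : M ≤ Y)
    (hcop : (Nat.card (oPi π Y)).Coprime (Nat.card M)) :
    (oPi π Y).map Y.subtype ≤ centralizer M := by
  rintro _ ⟨y, hy, rfl⟩
  rw [mem_centralizer_iff]
  intro m hm
  have hdisj : Disjoint (oPi π Y) (M.subgroupOf Y) := by
    refine disjoint_of_coprime_natCard ?_
    rwa [Nat.card_congr (subgroupOfEquivOfLe hMY).toEquiv]
  have := commute_of_normal_of_disjoint _ _ inferInstance (Normal.subgroupOf ‹_› Y) hdisj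
    y ⟨m, hMY hm⟩ hy hm
  exact (congrArg Subtype.val this).symm

lemma card_oPi_dvd_card_oPi_subgroupOf {Y C : Subgroup G} (hYC : (oPi π Y).map Y.subtype ≤ C) :
    Nat.card (oPi π Y) ∣ Nat.card (oPi π (Y.subgroupOf C)) := by
  let f : Y.subgroupOf C →* Y :=
    (C.subtype.comp (Y.subgroupOf C).subtype).codRestrict Y fun z => z.2
  refine card_oPi_dvd_of_injective (f := f) (fun a b h => ?_) fun y hy => ?_
  · have hval := congrArg Subtype.val h
    exact Subtype.ext (Subtype.ext hval)
  · exact ⟨⟨⟨y, hYC ⟨y, hy, rfl⟩⟩, y.2⟩, rfl⟩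

end Reduction

theorem card_oPi_dvd_card_oPi_of_isPiNat_index {π : Set ℕ} {G : Type*} [Group G] [Finite G]
    [Group.IsSolvable G] (Y : Subgroup G) (hY : IsPiNat π Y.index) :
    Nat.card (oPi π Y) ∣ Nat.card (oPi π G) := by
  induction hn : Nat.card G using Nat.strong_induction_on generalizing G with
  | _ n IH =>
  subst hn
  rcases subsingleton_or_nontrivial G with hG | hG
  · simp
  obtain ⟨p, hp, M, hMn, hMp, hMbot⟩ := exists_normal_isPGroup_ne_bot G
  have := Fact.mk hp
  obtain ⟨k, hMk⟩ := hMp.exists_card_eq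
  have hlt_quot : Nat.card (G ⧸ M) < Nat.card G := by
    rw [← index_eq_card, ← M.index_mul_card]
    exact lt_mul_of_one_lt_right (Nat.pos_of_ne_zero index_ne_zero_of_finite)
      (M.one_lt_card_iff_ne_bot.mpr hMbot)
  have hY_quot := card_oPi_dvd_card_mul_card_oPi_map (π := π) M Y
  have IH_quot := IH _ hlt_quot (Y.map (QuotientGroup.mk' M))
    (hY.of_dvd (index_map_dvd Y (QuotientGroup.mk'_surjective M))) rfl
  by_cases hpπ : p ∈ π
  · have hMπ : IsPiNat π (Nat.card (QuotientGroup.mk' M).ker) := by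
      rw [QuotientGroup.ker_mk', hMk]
      exact .prime_pow hp hpπ k
    have hX_quot := card_ker_mul_card_oPi_dvd (QuotientGroup.mk'_surjective M) hMπ
    rw [QuotientGroup.ker_mk'] at hX_quot
    exact hY_quot.trans ((mul_dvd_mul_left _ IH_quot).trans hX_quot)
  have hMcop : ∀ {m : ℕ}, IsPiNat π m → (Nat.card M).Coprime m := fun hm =>
    hMk ▸ hm.coprime_prime_pow hp hpπ k
  by_cases hMc : M ≤ center G
  · exact ((hMcop (isPiNat_card_oPi π Y)).symm.dvd_of_dvd_mul_left hY_quot).trans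
      (IH_quot.trans (card_oPi_quotient_dvd_of_le_center M hMc (hMcop (isPiNat_card_oPi π _))))
  have hYC := map_oPi_le_centralizer (le_of_coprime_card_index (hMcop hY))
    (hMcop (isPiNat_card_oPi π Y)).symm
  have hlt_C : Nat.card (centralizer (M : Set G)) < Nat.card G := by
    rw [← (centralizer (M : Set G)).index_mul_card]
    refine lt_mul_of_one_lt_left Nat.card_pos (one_lt_index_of_ne_top fun h => hMc ?_)
    exact centralizer_eq_top_iff_subset.mp h
  exact (card_oPi_dvd_card_oPi_subgroupOf hYC).trans ((IH _ hlt_C _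
    (hY.of_dvd (relIndex_dvd_index_of_normal_right Y _)) rfl).trans (card_oPi_dvd_of_normal _))

lemma exists_isPGroup_not_dvd_relIndex {G : Type*} [Group G] [Finite G] {p : ℕ}
    [hp : Fact p.Prime] {A B D : Subgroup G} (hDA : D ≤ A) (hDB : D ≤ B)
    (hAB : Nat.card A ∣ Nat.card B) (hD : ¬ p ∣ D.relIndex B) :
    ∃ R : Subgroup G, R ≤ A ∧ R ≤ B ∧ IsPGroup p R ∧ ¬ p ∣ R.relIndex A ∧ ¬ p ∣ R.relIndex B := by
  obtain ⟨P⟩ := Sylow.nonempty (p := p) (G := D)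
  set R := (P : Subgroup D).map D.subtype
  have hRD : R ≤ D := map_subtype_le _
  have hRB : ¬ p ∣ R.relIndex B := by
    have hP : R.relIndex D = (P : Subgroup D).index := by
      rw [relIndex, ← comap_subtype, comap_map_eq_self_of_injective D.subtype_injective]
    rw [← relIndex_mul_relIndex R D B hRD hDB, hP, hp.out.dvd_mul]
    exact fun h => h.elim P.not_dvd_index hD
  have hRA : R.relIndex A ∣ R.relIndex B := by
    refine Nat.dvd_of_mul_dvd_mul_left (Nat.card_pos (α := R)) ?_
    rwa [card_mul_relIndex_of_le (hRD.trans hDA), card_mul_relIndex_of_le (hRD.trans hDB)]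
  exact ⟨R, hRD.trans hDA, hRD.trans hDB, P.isPGroup'.map _, fun h => hRB (h.trans hRA), hRB⟩

theorem common_sylow_of_ors_general {X : Type*} [Group X] [Finite X] [Group.IsSolvable X] {s r : ℕ}
    (hs : s.Prime) (hr : r.Prime) (hrs : r ≠ s)
    (Y : Subgroup X) (a : ℕ) (hYi : Y.index = s ^ a)
    (OY : Subgroup ↥Y) (OX : Subgroup X)
    (hOY : IsMaxNormalPiSubgroup {r, s} OY) (hOX : IsMaxNormalPiSubgroup {r, s} OX) :
    ∃ R : Subgroup X, R ≤ OY.map Y.subtype ∧ R ≤ OX ∧ IsPGroup r ↥R ∧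
      ¬ r ∣ R.relIndex (OY.map Y.subtype) ∧ ¬ r ∣ R.relIndex OX := by
  have := Fact.mk hr
  have := hOX.1
  have hYπ : IsPiNat {r, s} Y.index :=
    hYi ▸ .prime_pow hs (Set.mem_insert_of_mem r (Set.mem_singleton s)) a
  have hD : OX ⊓ Y ≤ OY.map Y.subtype := by
    rw [← subgroupOf_map_subtype]
    exact map_mono (hOY.2.2 _ (hOX.1.subgroupOf Y)
      (IsPiNat.of_dvd hOX.2.1 (card_comap_dvd_of_injective _ _ Y.subtype_injective)))
  have hcard : Nat.card (OY.map Y.subtype) ∣ Nat.card OX := by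
    rw [card_map_of_injective Y.subtype_injective, hOY.eq_oPi, hOX.eq_oPi]
    exact card_oPi_dvd_card_oPi_of_isPiNat_index Y hYπ
  refine exists_isPGroup_not_dvd_relIndex hD inf_le_left hcard fun h => hrs ?_
  rw [inf_relIndex_left] at h
  have hrsa : r ∣ s ^ a := hYi ▸ h.trans (relIndex_dvd_index_of_normal_right Y OX)
  exact (Nat.prime_dvd_prime_iff_eq hr hs).mp (hr.dvd_of_dvd_pow hrsa)

theorem common_sylow_of_ors {X : Type*} [Group X] [Finite X] [Group.IsSolvable X] {s r : ℕ}
    (hs : s.Prime) (hr : r.Prime) (hrs : r ≠ s) (hrX : r ∣ Nat.card X)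
    (Y : Subgroup X) (a : ℕ) (hYi : Y.index = s ^ a)
    (OY : Subgroup ↥Y) (OX : Subgroup X)
    (hOY : IsMaxNormalPiSubgroup {r, s} OY) (hOX : IsMaxNormalPiSubgroup {r, s} OX) :
    ∃ R : Subgroup X, R ≤ OY.map Y.subtype ∧ R ≤ OX ∧ IsPGroup r ↥R ∧
      ¬ r ∣ R.relIndex (OY.map Y.subtype) ∧ ¬ r ∣ R.relIndex OX :=
  common_sylow_of_ors_general hs hr hrs Y a hYi OY OX hOY hOX
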